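/- For every bounded linear operator A on a complex Hilbert space and every t ∈ [0,1], w(A)^2 ≤ (1/4)‖ |A|^{4t} + |A*|^{4(1−t)} ‖ + (1/2)w(|A|^{2t}|A*|^{2(1−t)}). -/

import Mathlib

open ContinuousLinearMap

variable {H : Type*} [NormedAddCommGroup H] [InnerProductSpace ℂ H] [CompleteSpace H]

noncomputable def numRadius (A : H →L[ℂ] H) : ℝ :=
  ⨆ x : {x : H // ‖x‖ = 1}, ‖(inner ℂ (A x) (x : H) : ℂ)‖

noncomputable def absOp (A : H →L[ℂ] H) : H →L[ℂ] H := CFC.sqrt (adjoint A * A)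

noncomputable def rpowOp (T : H →L[ℂ] H) (t : ℝ) : H →L[ℂ] H := cfc (fun x : ℝ => x ^ t) T

namespace Stmt10Aux

open ComplexConjugate Polynomial

local notation "⟪" x ", " y "⟫" => (inner ℂ x y : ℂ)

lemma hP_sa (A : H →L[ℂ] H) : IsSelfAdjoint (adjoint A * A) := by
  rw [← star_eq_adjoint]; exact IsSelfAdjoint.star_mul_self A

lemma hQ_sa (A : H →L[ℂ] H) : IsSelfAdjoint (A * adjoint A) := by
  nth_rewrite 1 [← adjoint_adjoint A]; exact hP_sa (adjoint A)

lemma hP_nonneg (A : H →L[ℂ] H) : 0 ≤ adjoint A * A := by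
  rw [← star_eq_adjoint]; exact star_mul_self_nonneg A

lemma hQ_nonneg (A : H →L[ℂ] H) : 0 ≤ A * adjoint A := by
  nth_rewrite 1 [← adjoint_adjoint A]; exact hP_nonneg (adjoint A)

lemma hPσ (A : H →L[ℂ] H) : ∀ s ∈ spectrum ℝ (adjoint A * A), 0 ≤ s :=
  fun s hs => spectrum_nonneg_of_nonneg (hP_nonneg A) hs

lemma hQσ (A : H →L[ℂ] H) : ∀ s ∈ spectrum ℝ (A * adjoint A), 0 ≤ s :=
  fun s hs => spectrum_nonneg_of_nonneg (hQ_nonneg A) hs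

lemma mul_pow_comm (A : H →L[ℂ] H) (n : ℕ) :
    A * (adjoint A * A) ^ n = (A * adjoint A) ^ n * A := by
  induction n with
  | zero => simp
  | succ n ih =>
      rw [pow_succ, ← mul_assoc, ih, pow_succ]
      noncomm_ring

lemma mul_cfc_poly (A : H →L[ℂ] H) (p : ℝ[X]) :
    A * cfc (fun s => p.eval s) (adjoint A * A) = cfc (fun s => p.eval s) (A * adjoint A) * A := by
  have hP := hP_sa A
  have hQ := hQ_sa A
  induction p using Polynomial.induction_on' with
  | add p q hp hq =>
      have h1 : (fun s : ℝ => (p + q).eval s) = fun s => p.eval s + q.eval s := by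
        funext s; simp
      rw [h1, cfc_add _ _ _, cfc_add _ _ _, mul_add, add_mul, hp, hq]
  | monomial n c =>
      have h1 : (fun s : ℝ => (monomial n c).eval s) = fun s => c • s ^ n := by
        funext s; simp [smul_eq_mul]
      rw [h1, cfc_smul _ _ _, cfc_smul _ _ _, cfc_pow_id _ _, cfc_pow_id _ _,
        mul_smul_comm, smul_mul_assoc, mul_pow_comm]

lemma spec_subset (T : H →L[ℂ] H) (hT : 0 ≤ T) {M : ℝ} (hM : ‖T‖ ≤ M) :
    spectrum ℝ T ⊆ Set.Icc 0 M := by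
  intro s hs
  rcases subsingleton_or_nontrivial H with h | h
  · exfalso
    have : Subsingleton (H →L[ℂ] H) := ⟨fun f g => by ext x; exact Subsingleton.elim _ _⟩
    rw [Subsingleton.elim T 0] at hs
    simp [spectrum.zero_eq] at hs
  · exact ⟨spectrum_nonneg_of_nonneg hT hs,
      le_trans (le_abs_self s) (le_trans (spectrum.norm_le_norm_of_mem hs) hM)⟩

lemma cfc_dist_le {T : H →L[ℂ] H} (hT : IsSelfAdjoint T) {f g : ℝ → ℝ}
    (hf : Continuous f) (hg : Continuous g) {ε : ℝ} (hε : 0 ≤ ε)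
    (h : ∀ s ∈ spectrum ℝ T, |f s - g s| ≤ ε) : ‖cfc f T - cfc g T‖ ≤ ε := by
  rw [← cfc_sub f g T]
  exact norm_cfc_le hε (fun s hs => by simpa using h s hs)

lemma mul_cfc_comm (A : H →L[ℂ] H) {f : ℝ → ℝ} (hf : Continuous f) :
    A * cfc f (adjoint A * A) = cfc f (A * adjoint A) * A := by
  set P := adjoint A * A with hPdef
  set Q := A * adjoint A with hQdef
  have hP := hP_sa A
  have hQ := hQ_sa A
  have hsP : spectrum ℝ P ⊆ Set.Icc 0 (‖P‖ ⊔ ‖Q‖) :=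
    spec_subset P (hP_nonneg A) (le_sup_left)
  have hsQ : spectrum ℝ Q ⊆ Set.Icc 0 (‖P‖ ⊔ ‖Q‖) :=
    spec_subset Q (hQ_nonneg A) (le_sup_right)
  have key : ∀ ε > (0:ℝ), ‖A * cfc f P - cfc f Q * A‖ ≤ 2 * ‖A‖ * ε := by
    intro ε hε
    obtain ⟨p, hp⟩ := exists_polynomial_near_of_continuousOn 0 (‖P‖ ⊔ ‖Q‖) f
      hf.continuousOn ε hε
    have h1 : ‖cfc f P - cfc (fun s => p.eval s) P‖ ≤ ε :=
      cfc_dist_le hP hf (by fun_prop) hε.le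
        (fun s hs => by rw [abs_sub_comm]; exact (hp s (hsP hs)).le)
    have h2 : ‖cfc (fun s => p.eval s) Q - cfc f Q‖ ≤ ε :=
      cfc_dist_le hQ (by fun_prop) hf hε.le (fun s hs => (hp s (hsQ hs)).le)
    have split : A * cfc f P - cfc f Q * A
        = A * (cfc f P - cfc (fun s => p.eval s) P)
          + (cfc (fun s => p.eval s) Q - cfc f Q) * A := by
      rw [mul_sub, sub_mul, ← mul_cfc_poly A p]; abel
    calc ‖A * cfc f P - cfc f Q * A‖
        ≤ ‖A * (cfc f P - cfc (fun s => p.eval s) P)‖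
          + ‖(cfc (fun s => p.eval s) Q - cfc f Q) * A‖ := by rw [split]; exact norm_add_le _ _
      _ ≤ ‖A‖ * ε + ε * ‖A‖ := by
          have b1 := norm_mul_le A (cfc f P - cfc (fun s => p.eval s) P)
          have b2 := norm_mul_le (cfc (fun s => p.eval s) Q - cfc f Q) A
          have c1 : ‖A‖ * ‖cfc f P - cfc (fun s => p.eval s) P‖ ≤ ‖A‖ * ε :=
            mul_le_mul_of_nonneg_left h1 (norm_nonneg A)
          have c2 : ‖cfc (fun s => p.eval s) Q - cfc f Q‖ * ‖A‖ ≤ ε * ‖A‖ :=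
            mul_le_mul_of_nonneg_right h2 (norm_nonneg A)
          linarith
      _ = 2 * ‖A‖ * ε := by ring
  have hz : ‖A * cfc f P - cfc f Q * A‖ ≤ 0 := by
    refine le_of_forall_pos_le_add (fun δ hδ => ?_)
    have h2 : 0 < 2 * ‖A‖ + 1 := by positivity
    have hk := key (δ / (2 * ‖A‖ + 1)) (by positivity)
    have : 2 * ‖A‖ * (δ / (2 * ‖A‖ + 1)) ≤ δ := by
      rw [mul_div_assoc', div_le_iff₀ h2]
      nlinarith [norm_nonneg A]
    linarith
  rw [← sub_eq_zero]
  exact norm_le_zero_iff.mp hz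

lemma continuous_cfc_param (P : H →L[ℂ] H) (hP : IsSelfAdjoint P)
    (F : ℝ → ℝ → ℝ) (hF : Continuous fun q : ℝ × ℝ => F q.1 q.2) :
    Continuous fun ε : ℝ => cfc (F ε) P := by
  let G : C(ℝ × (spectrum ℝ P), ℝ) :=
    ⟨fun q => F q.1 q.2.1,
      hF.comp (continuous_fst.prodMk (continuous_subtype_val.comp continuous_snd))⟩
  have heq : ∀ ε : ℝ, cfc (F ε) P = cfcHom hP (R := ℝ) (G.curry ε) := by
    intro ε
    rw [cfc_apply (F ε) P hP (by fun_prop)]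
    congr 1
  simp only [heq]
  exact (cfcHom_isClosedEmbedding hP).continuous.comp (ContinuousMap.curry G).continuous

lemma buzano (x u v : H) (hx : ‖x‖ = 1) :
    ‖⟪u, x⟫ * ⟪x, v⟫‖ ≤ (‖u‖ * ‖v‖ + ‖⟪u, v⟫‖) / 2 := by
  set c : ℂ := ⟪x, v⟫ with hc
  set w := (2 * c) • x - v with hw
  have hnw : ‖w‖ = ‖v‖ := by
    have h2 : ‖w‖ ^ 2 = ‖v‖ ^ 2 := by
      have hip : ⟪(2 * c) • x, v⟫ = 2 * (‖c‖ : ℂ) ^ 2 := by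
        rw [inner_smul_left, ← hc, map_mul, mul_assoc, RCLike.conj_mul]
        norm_num [Complex.conj_ofNat]
      rw [hw, norm_sub_sq (𝕜 := ℂ), hip, norm_smul, hx]
      have hre : RCLike.re (2 * (‖c‖ : ℂ) ^ 2) = 2 * ‖c‖ ^ 2 := by
        simp [← Complex.ofReal_pow]
      rw [hre]
      simp [norm_mul]
      ring
    have := abs_of_nonneg (norm_nonneg w)
    nlinarith [norm_nonneg w, norm_nonneg v]
  have key : (2:ℂ) * (⟪u, x⟫ * ⟪x, v⟫) = ⟪u, w⟫ + ⟪u, v⟫ := by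
    rw [hw, inner_sub_right, inner_smul_right, ← hc]; ring
  have h6 : 2 * ‖⟪u, x⟫ * ⟪x, v⟫‖ = ‖⟪u, w⟫ + ⟪u, v⟫‖ := by
    rw [← key, norm_mul]
    norm_num
  have h5 : ‖⟪u, w⟫ + ⟪u, v⟫‖ ≤ ‖u‖ * ‖v‖ + ‖⟪u, v⟫‖ := by
    refine le_trans (norm_add_le _ _) ?_
    have := norm_inner_le_norm (𝕜 := ℂ) u w
    rw [hnw] at this
    linarith
  linarith

lemma sa_inner_swap {T : H →L[ℂ] H} (hT : IsSelfAdjoint T) (a b : H) :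
    ⟪T a, b⟫ = ⟪a, T b⟫ := by
  have h1 : adjoint T = T := by rw [← star_eq_adjoint]; exact hT
  nth_rewrite 1 [← h1]
  exact adjoint_inner_left T b a

lemma inner_re_le_of_le {S T : H →L[ℂ] H} (h : S ≤ T) (y : H) :
    Complex.re ⟪S y, y⟫ ≤ Complex.re ⟪T y, y⟫ := by
  have h0 := ((le_def S T).mp h).re_inner_nonneg_left y
  simp only [sub_apply, inner_sub_left, map_sub] at h0
  change (0:ℝ) ≤ Complex.re _ - Complex.re _ at h0
  linarith

lemma norm_apply_sq {S : H →L[ℂ] H} (hS : IsSelfAdjoint S) (a : H) :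
    ‖S a‖ ^ 2 = Complex.re ⟪(S * S) a, a⟫ := by
  have h := inner_self_eq_norm_sq (𝕜 := ℂ) (S a)
  rw [← h, ContinuousLinearMap.mul_apply, sa_inner_swap hS (S a) a]
  rfl

lemma cont_shift_rpow {ε : ℝ} (p : ℝ) (hε : 0 < ε) :
    Continuous (fun s : ℝ => (Real.sqrt s + ε) ^ p) := by
  refine continuous_iff_continuousAt.mpr fun s => ContinuousAt.rpow_const ?_ (Or.inl ?_)
  · exact (Real.continuous_sqrt.add continuous_const).continuousAt
  · positivity

theorem kato (A : H →L[ℂ] H) {t : ℝ} (ht0 : 0 ≤ t) (ht1 : t ≤ 1) (x y : H) :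
    ‖⟪A x, y⟫‖ ^ 2 ≤
      Complex.re ⟪cfc (fun s : ℝ => s ^ t) (adjoint A * A) x, x⟫ *
      Complex.re ⟪cfc (fun s : ℝ => s ^ (1 - t)) (A * adjoint A) y, y⟫ := by
  set P := adjoint A * A with hPdef
  set Q := A * adjoint A with hQdef
  have hP := hP_sa A
  have hQ := hQ_sa A
  have hQσ' : ∀ s ∈ spectrum ℝ Q, 0 ≤ s := hQσ A
  have hPσ' : ∀ s ∈ spectrum ℝ P, 0 ≤ s := hPσ A
  set C := cfc (fun s : ℝ => s ^ (1 - t)) Q with hCdef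
  have hCpos : (0 : H →L[ℂ] H) ≤ C :=
    cfc_nonneg (fun s hs => Real.rpow_nonneg (hQσ' s hs) _)
  have hCre : 0 ≤ Complex.re ⟪C y, y⟫ :=
    ((nonneg_iff_isPositive C).mp hCpos).re_inner_nonneg_left y
  have stepA : ∀ ε : ℝ, 0 < ε →
      ‖⟪A x, y⟫‖ ^ 2 ≤
        Complex.re ⟪cfc (fun s : ℝ => (Real.sqrt s + ε) ^ (2 * t)) P x, x⟫ *
        Complex.re ⟪C y, y⟫ := by
    intro ε hε
    set X := cfc (fun s : ℝ => (Real.sqrt s + ε) ^ (-t)) P with hXdef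
    set Y := cfc (fun s : ℝ => (Real.sqrt s + ε) ^ t) P with hYdef
    have hXsa : IsSelfAdjoint X := cfc_predicate _ P
    have hYsa : IsSelfAdjoint Y := cfc_predicate _ P
    have hYX : Y * X = 1 := by
      rw [hYdef, hXdef, ← cfc_mul _ _ P (cont_shift_rpow t hε).continuousOn
        (cont_shift_rpow (-t) hε).continuousOn]
      have he : (fun s : ℝ => (Real.sqrt s + ε) ^ t * (Real.sqrt s + ε) ^ (-t))
          = fun _ => (1:ℝ) := by
        funext s
        have hb : (0:ℝ) < Real.sqrt s + ε := by positivity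
        rw [Real.rpow_neg hb.le, mul_inv_cancel₀ (Real.rpow_pos_of_pos hb t).ne']
      rw [he, cfc_const_one ℝ P]
    set z := adjoint A y with hzdef
    have hfact : ⟪A x, y⟫ = ⟪Y x, X z⟫ := by
      rw [← adjoint_inner_right A x y, ← hzdef]
      nth_rewrite 1 [show z = (Y * X) z by rw [hYX, ContinuousLinearMap.one_apply]]
      rw [ContinuousLinearMap.mul_apply, sa_inner_swap hYsa x (X z)]
    have hCS : ‖⟪A x, y⟫‖ ^ 2 ≤ ‖Y x‖ ^ 2 * ‖X z‖ ^ 2 := by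
      rw [hfact, ← mul_pow]
      exact pow_le_pow_left₀ (norm_nonneg _) (norm_inner_le_norm (𝕜 := ℂ) (Y x) (X z)) 2
    have hYsq : ‖Y x‖ ^ 2
        = Complex.re ⟪cfc (fun s : ℝ => (Real.sqrt s + ε) ^ (2 * t)) P x, x⟫ := by
      have hYY : Y * Y = cfc (fun s : ℝ => (Real.sqrt s + ε) ^ (2 * t)) P := by
        rw [hYdef, ← cfc_mul _ _ P (cont_shift_rpow t hε).continuousOn
          (cont_shift_rpow t hε).continuousOn]
        refine cfc_congr (fun s _ => ?_)
        have hb : (0:ℝ) < Real.sqrt s + ε := by positivity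
        rw [← Real.rpow_add hb, two_mul]
      rw [norm_apply_sq hYsa x, hYY]
    have hXsq : ‖X z‖ ^ 2 ≤ Complex.re ⟪C y, y⟫ := by
      have h1 : ‖X z‖ ^ 2 = Complex.re ⟪(A * (X * X) * adjoint A) y, y⟫ := by
        rw [norm_apply_sq hXsa z]
        have happ : (A * (X * X) * adjoint A) y = A ((X * X) z) := by
          simp [mul_apply, hzdef]
        rw [happ, ← adjoint_inner_right A ((X * X) z) y, ← hzdef]
      have hXX : X * X = cfc (fun s : ℝ => (Real.sqrt s + ε) ^ (-(2 * t))) P := by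
        rw [hXdef, ← cfc_mul _ _ P (cont_shift_rpow (-t) hε).continuousOn
          (cont_shift_rpow (-t) hε).continuousOn]
        refine cfc_congr (fun s _ => ?_)
        have hb : (0:ℝ) < Real.sqrt s + ε := by positivity
        rw [← Real.rpow_add hb]; ring_nf
      have h2 : A * (X * X) * adjoint A
          = cfc (fun s : ℝ => (Real.sqrt s + ε) ^ (-(2 * t)) * s) Q := by
        rw [hXX, mul_cfc_comm A (cont_shift_rpow (-(2*t)) hε), mul_assoc, ← hQdef]
        nth_rewrite 2 [← cfc_id' ℝ Q hQ]
        rw [← cfc_mul (fun s : ℝ => (Real.sqrt s + ε) ^ (-(2 * t))) (fun s : ℝ => s) Q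
          (cont_shift_rpow (-(2*t)) hε).continuousOn
          (continuous_id.continuousOn : ContinuousOn (fun x : ℝ => x) _)]
      have hg1t : Continuous (fun s : ℝ => s ^ (1 - t)) :=
        continuous_iff_continuousAt.mpr fun s =>
          Real.continuousAt_rpow_const s _ (Or.inr (by linarith))
      have h3 : cfc (fun s : ℝ => (Real.sqrt s + ε) ^ (-(2 * t)) * s) Q ≤ C := by
        refine cfc_mono ?_ (((cont_shift_rpow (-(2*t)) hε).mul continuous_id).continuousOn)
          hg1t.continuousOn
        intro s hs
        have hs0 := hQσ' s hs
        rcases eq_or_lt_of_le hs0 with h | h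
        · rw [← h]
          simpa using Real.rpow_nonneg (le_refl (0:ℝ)) (1 - t)
        · have hsq : (0:ℝ) < Real.sqrt s := Real.sqrt_pos.mpr h
          have hb : (0:ℝ) < Real.sqrt s + ε := by positivity
          have e1 : (Real.sqrt s + ε) ^ (-(2 * t)) ≤ (Real.sqrt s) ^ (-(2 * t)) := by
            rw [Real.rpow_neg hb.le, Real.rpow_neg hsq.le]
            exact inv_anti₀ (Real.rpow_pos_of_pos hsq _)
              (Real.rpow_le_rpow hsq.le (by linarith) (by positivity))
          have e2 : (Real.sqrt s) ^ (-(2 * t)) * s = s ^ (1 - t) := by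
            rw [Real.sqrt_eq_rpow, ← Real.rpow_mul hs0]
            nth_rewrite 2 [← Real.rpow_one s]
            rw [← Real.rpow_add h]
            norm_num
            ring_nf
          calc (Real.sqrt s + ε) ^ (-(2 * t)) * s
              ≤ (Real.sqrt s) ^ (-(2 * t)) * s :=
                mul_le_mul_of_nonneg_right e1 hs0
            _ = s ^ (1 - t) := e2
      rw [h1, h2]
      exact inner_re_le_of_le h3 y
    rw [← hYsq]
    exact le_trans hCS (mul_le_mul_of_nonneg_left hXsq (sq_nonneg _))
  have hjoint : Continuous fun q : ℝ × ℝ => (Real.sqrt q.2 + q.1) ^ (2 * t) := by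
    refine Continuous.rpow_const ?_ (fun q => Or.inr (by positivity))
    exact (Real.continuous_sqrt.comp continuous_snd).add continuous_fst
  have c1 : Continuous fun ε : ℝ =>
      Complex.re ⟪cfc (fun s : ℝ => (Real.sqrt s + ε) ^ (2 * t)) P x, x⟫ *
        Complex.re ⟪C y, y⟫ := by
    refine Continuous.mul ?_ continuous_const
    refine Continuous.comp Complex.continuous_re ?_
    refine Continuous.inner ?_ continuous_const
    have c0 := continuous_cfc_param P hP (fun ε s => (Real.sqrt s + ε) ^ (2 * t)) hjoint
    exact (ContinuousLinearMap.apply ℂ H x).continuous.comp c0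
  have hval : cfc (fun s : ℝ => (Real.sqrt s + (0:ℝ)) ^ (2 * t)) P
      = cfc (fun s : ℝ => s ^ t) P := by
    refine cfc_congr (fun s hs => ?_)
    rw [add_zero, Real.sqrt_eq_rpow, ← Real.rpow_mul (hPσ' s hs),
      show (1:ℝ)/2 * (2 * t) = t by ring]
  have htend := ((c1.tendsto 0).mono_left (nhdsWithin_le_nhds (s := Set.Ioi (0:ℝ))))
  rw [hval] at htend
  exact ge_of_tendsto htend (Filter.eventually_of_mem self_mem_nhdsWithin
    (fun ε hε => stepA ε hε))

lemma absOp_eq (A : H →L[ℂ] H) : absOp A = cfc Real.sqrt (adjoint A * A) := by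
  rw [absOp]
  refine CFC.sqrt_unique ?_ (cfc_nonneg fun s _ => Real.sqrt_nonneg s)
  rw [← cfc_mul _ _ _ Real.continuous_sqrt.continuousOn Real.continuous_sqrt.continuousOn]
  calc cfc (fun s : ℝ => Real.sqrt s * Real.sqrt s) (adjoint A * A)
      = cfc (fun s : ℝ => s) (adjoint A * A) :=
        cfc_congr (fun s hs => Real.mul_self_sqrt (hPσ A s hs))
    _ = adjoint A * A := cfc_id ℝ _ (hP_sa A)

lemma rpowOp_absOp (A : H →L[ℂ] H) {c : ℝ} (hc : 0 ≤ c) :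
    rpowOp (absOp A) c = cfc (fun s : ℝ => s ^ (c / 2)) (adjoint A * A) := by
  have hcont : Continuous (fun x : ℝ => x ^ c) :=
    continuous_iff_continuousAt.mpr fun x => Real.continuousAt_rpow_const x c (Or.inr hc)
  rw [rpowOp, absOp_eq A,
    ← cfc_comp' (fun x : ℝ => x ^ c) Real.sqrt (adjoint A * A) hcont.continuousOn
      Real.continuous_sqrt.continuousOn (ha := hP_sa A)]
  refine cfc_congr (fun s hs => ?_)
  show Real.sqrt s ^ c = s ^ (c / 2)
  rw [Real.sqrt_eq_rpow, ← Real.rpow_mul (hPσ A s hs)]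
  rw [show (1:ℝ)/2 * c = c / 2 by ring]

lemma numRadius_nonneg (T : H →L[ℂ] H) : 0 ≤ numRadius T :=
  Real.iSup_nonneg fun _ => norm_nonneg _

lemma le_numRadius (T : H →L[ℂ] H) {x : H} (hx : ‖x‖ = 1) : ‖⟪T x, x⟫‖ ≤ numRadius T := by
  have hbdd : BddAbove (Set.range fun y : {y : H // ‖y‖ = 1} => ‖⟪T y, (y : H)⟫‖) := by
    refine ⟨‖T‖, ?_⟩
    rintro r ⟨⟨y, hy⟩, rfl⟩
    calc ‖⟪T y, y⟫‖ ≤ ‖T y‖ * ‖y‖ := norm_inner_le_norm _ _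
      _ ≤ (‖T‖ * ‖y‖) * ‖y‖ := by gcongr; exact le_opNorm T y
      _ = ‖T‖ := by rw [hy]; ring
  exact le_ciSup hbdd ⟨x, hx⟩

lemma inner_self_real {T : H →L[ℂ] H} (hT : IsSelfAdjoint T) (a : H) :
    ⟪T a, a⟫ = (Complex.re ⟪T a, a⟫ : ℂ) := by
  have h1 : (starRingEnd ℂ) ⟪T a, a⟫ = ⟪T a, a⟫ := by
    rw [inner_conj_symm]
    exact (sa_inner_swap hT a a).symm
  exact (Complex.conj_eq_iff_re.mp h1).symm

lemma norm_inner_self_of_nonneg {T : H →L[ℂ] H} (hT : 0 ≤ T) (a : H) :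
    ‖⟪T a, a⟫‖ = Complex.re ⟪T a, a⟫ := by
  have hsa : IsSelfAdjoint T := ((nonneg_iff_isPositive T).mp hT).isSelfAdjoint
  have hre : 0 ≤ Complex.re ⟪T a, a⟫ := ((nonneg_iff_isPositive T).mp hT).re_inner_nonneg_left a
  rw [inner_self_real hsa a, Complex.norm_real]
  simpa using abs_of_nonneg hre

lemma rpow_mul_self_eq {s a : ℝ} (hs : 0 ≤ s) (ha : 0 ≤ a) :
    s ^ a * s ^ a = s ^ (2 * a) := by
  rcases eq_or_lt_of_le ha with h | h
  · rw [← h]; simp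
  · rw [two_mul, Real.rpow_add' hs (by positivity)]

end Stmt10Aux

open Stmt10Aux in
theorem stmt10 (A : H →L[ℂ] H) (t : ℝ) (ht : t ∈ Set.Icc (0 : ℝ) 1) :
    numRadius A ^ 2 ≤
      (1 / 4) * ‖rpowOp (absOp A) (4 * t) + rpowOp (absOp (adjoint A)) (4 * (1 - t))‖
      + (1 / 2) * numRadius (rpowOp (absOp A) (2 * t) * rpowOp (absOp (adjoint A)) (2 * (1 - t))) := by
  obtain ⟨ht0, ht1⟩ := ht
  have h1t0 : 0 ≤ 1 - t := by linarith
  set P := adjoint A * A with hPdef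
  set Q := A * adjoint A with hQdef
  set B := cfc (fun s : ℝ => s ^ t) P with hBdef
  set C := cfc (fun s : ℝ => s ^ (1 - t)) Q with hCdef
  have hBsa : IsSelfAdjoint B := cfc_predicate _ P
  have hCsa : IsSelfAdjoint C := cfc_predicate _ Q
  have hBpos : (0 : H →L[ℂ] H) ≤ B := cfc_nonneg fun s hs => Real.rpow_nonneg (hPσ A s hs) _
  have hCpos : (0 : H →L[ℂ] H) ≤ C := cfc_nonneg fun s hs => Real.rpow_nonneg (hQσ A s hs) _
  have hcont_t : Continuous (fun s : ℝ => s ^ t) :=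
    continuous_iff_continuousAt.mpr fun x => Real.continuousAt_rpow_const x t (Or.inr ht0)
  have hcont_1t : Continuous (fun s : ℝ => s ^ (1 - t)) :=
    continuous_iff_continuousAt.mpr fun x => Real.continuousAt_rpow_const x _ (Or.inr h1t0)
  -- identifications of the statement's operators
  have hB : rpowOp (absOp A) (2 * t) = B := by
    rw [rpowOp_absOp A (by linarith), show (2*t)/2 = t by ring, hBdef]
  have hC : rpowOp (absOp (adjoint A)) (2 * (1 - t)) = C := by
    rw [rpowOp_absOp (adjoint A) (by linarith), adjoint_adjoint,
      show (2*(1-t))/2 = 1 - t by ring, hCdef]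
  have hB4 : rpowOp (absOp A) (4 * t) = B * B := by
    rw [rpowOp_absOp A (by linarith), show (4*t)/2 = 2*t by ring, hBdef,
      ← cfc_mul _ _ P hcont_t.continuousOn hcont_t.continuousOn]
    exact cfc_congr fun s hs => (rpow_mul_self_eq (hPσ A s hs) ht0).symm
  have hC4 : rpowOp (absOp (adjoint A)) (4 * (1 - t)) = C * C := by
    rw [rpowOp_absOp (adjoint A) (by linarith), adjoint_adjoint,
      show (4*(1-t))/2 = 2*(1-t) by ring, hCdef,
      ← cfc_mul _ _ Q hcont_1t.continuousOn hcont_1t.continuousOn]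
    exact cfc_congr fun s hs => (rpow_mul_self_eq (hQσ A s hs) h1t0).symm
  rw [hB4, hC4, hB, hC]
  set K := (1/4) * ‖B * B + C * C‖ + (1/2) * numRadius (B * C) with hKdef
  have hK0 : 0 ≤ K := by
    have h1 := numRadius_nonneg (B * C)
    have h2 := norm_nonneg (B * B + C * C)
    rw [hKdef]; linarith
  have key : ∀ y : {y : H // ‖y‖ = 1},
      ‖(inner ℂ (A y) ((y : H)) : ℂ)‖ ≤ Real.sqrt K := by
    rintro ⟨x, hx⟩
    rw [Real.le_sqrt (norm_nonneg _) hK0]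
    have k1 := kato A ht0 ht1 x x
    have e0 : ‖B x‖ * ‖C x‖ ≤ (‖B x‖^2 + ‖C x‖^2) / 2 := by
      nlinarith [sq_nonneg (‖B x‖ - ‖C x‖)]
    have esum : ‖B x‖^2 + ‖C x‖^2 = Complex.re (inner ℂ ((B * B + C * C) x) x : ℂ) := by
      rw [norm_apply_sq hBsa x, norm_apply_sq hCsa x]
      simp [add_apply, inner_add_left]
    have e3 : Complex.re (inner ℂ ((B * B + C * C) x) x : ℂ) ≤ ‖B * B + C * C‖ := by
      have r1 := RCLike.re_le_norm (K := ℂ) (inner ℂ ((B * B + C * C) x) x : ℂ)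
      have r2 := norm_inner_le_norm (𝕜 := ℂ) ((B * B + C * C) x) x
      have r3 := le_opNorm (B * B + C * C) x
      rw [hx] at r2 r3
      simpa using le_trans r1 (le_trans r2 (by simpa using r3))
    have e2 : ‖(inner ℂ (B x) (C x) : ℂ)‖ ≤ numRadius (B * C) := by
      have hflip : (inner ℂ ((B * C) x) x : ℂ) = inner ℂ (C x) (B x) := by
        rw [ContinuousLinearMap.mul_apply]
        exact sa_inner_swap hBsa (C x) x
      have hn : ‖(inner ℂ (B x) (C x) : ℂ)‖ = ‖(inner ℂ ((B * C) x) x : ℂ)‖ := by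
        rw [hflip]
        exact norm_inner_symm (𝕜 := ℂ) (B x) (C x)
      rw [hn]
      exact le_numRadius (B * C) hx
    calc ‖(inner ℂ (A x) x : ℂ)‖ ^ 2
        ≤ Complex.re (inner ℂ (B x) x : ℂ) * Complex.re (inner ℂ (C x) x : ℂ) := k1
      _ = ‖(inner ℂ (B x) x : ℂ)‖ * ‖(inner ℂ x (C x) : ℂ)‖ := by
          rw [← norm_inner_self_of_nonneg hBpos x, ← norm_inner_self_of_nonneg hCpos x,
            norm_inner_symm (𝕜 := ℂ) x (C x)]
      _ = ‖(inner ℂ (B x) x : ℂ) * (inner ℂ x (C x) : ℂ)‖ := (norm_mul _ _).symm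
      _ ≤ (‖B x‖ * ‖C x‖ + ‖(inner ℂ (B x) (C x) : ℂ)‖) / 2 := buzano x (B x) (C x) hx
      _ ≤ K := by
          rw [hKdef]
          rw [esum] at e0
          linarith
  have hfin : numRadius A ≤ Real.sqrt K := Real.iSup_le key (Real.sqrt_nonneg K)
  calc numRadius A ^ 2 ≤ Real.sqrt K ^ 2 :=
        pow_le_pow_left₀ (numRadius_nonneg A) hfin 2
    _ = K := Real.sq_sqrt hK0
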